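/- arXiv:1401.0876 — 3 statements merged into one kernel-verified Lean document; each statement's English description precedes it below -/
import Mathlib

section
/- Let f : G → H be a group homomorphism with finite kernel. If C ⊆ H is a virtually cyclic subgroup, then the preimage f⁻¹(C) is virtually cyclic. -/
/-! If `D ≤ C` is cyclic of finite index, then `f⁻¹(D)` has finite index in `f⁻¹(C)` and maps with
finite kernel into the cyclic group `D`. Choosing `a` whose image generates `f(f⁻¹(D))`, the subgroup
`⟨a⟩` together with the finite normal kernel generates `f⁻¹(D)`, so every coset of `⟨a⟩` is
represented by a kernel element and `⟨a⟩` has finite index. -/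

/-- A group is virtually cyclic if it has a cyclic subgroup of finite index. -/
def VirtuallyCyclic (G : Type*) [Group G] : Prop :=
  ∃ H : Subgroup G, IsCyclic H ∧ H.FiniteIndex

namespace Subgroup

variable {G : Type*} [Group G]

/-- Since `N` is normal, `G = N * H`, so `N` surjects onto `G ⧸ H`. -/
theorem finiteIndex_of_sup_eq_top {H N : Subgroup G} [N.Normal] [Finite N] (h : H ⊔ N = ⊤) :
    H.FiniteIndex := by
  have : Finite (G ⧸ H) := by
    refine Finite.of_surjective (fun n : N ↦ (n : G ⧸ H)) fun q ↦ ?_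
    obtain ⟨x, rfl⟩ := QuotientGroup.mk_surjective q
    have hx : x ∈ ((N ⊔ H : Subgroup G) : Set G) := by simp [sup_comm, h]
    rw [normal_mul] at hx
    obtain ⟨n, hn, k, hk, rfl⟩ := hx
    exact ⟨⟨n, hn⟩, QuotientGroup.eq.mpr (by simpa using inv_mem hk)⟩
  exact finiteIndex_of_finite_quotient

instance finiteIndex_comap {G' : Type*} [Group G'] (K : Subgroup G') [K.FiniteIndex]
    (f : G →* G') : (K.comap f).FiniteIndex :=
  ⟨by rw [index_comap]; exact (instFiniteIndex_subgroupOf K f.range).index_ne_zero⟩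

end Subgroup

instance MonoidHom.finite_ker_subgroupComap {G G' : Type*} [Group G] [Group G'] (f : G →* G')
    [Finite f.ker] (K : Subgroup G') : Finite (f.subgroupComap K).ker :=
  Finite.of_injective (fun k ↦ (⟨k.1.1, congrArg Subtype.val k.2⟩ : f.ker))
    fun _ _ h ↦ Subtype.ext <| Subtype.ext <| Subtype.mk.inj h

namespace VirtuallyCyclic

variable {G G' : Type*} [Group G] [Group G']

theorem of_finiteIndex {K : Subgroup G} [K.FiniteIndex] (hK : VirtuallyCyclic K) :
    VirtuallyCyclic G := by
  obtain ⟨Z, hZ, hZK⟩ := hK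
  refine ⟨Z.map K.subtype, ?_, ⟨?_⟩⟩
  · exact isCyclic_of_surjective _ (K.subtype.subgroupMap_surjective Z)
  · rw [Subgroup.index_map_subtype]
    exact Nat.mul_ne_zero hZK.index_ne_zero Subgroup.FiniteIndex.index_ne_zero

theorem of_finite_ker_of_isCyclic_range (f : G →* G') [Finite f.ker] [IsCyclic f.range] :
    VirtuallyCyclic G := by
  obtain ⟨b, hb⟩ := (Subgroup.isCyclic_iff_exists_zpowers_eq_top f.range).mp ‹_›
  obtain ⟨a, rfl⟩ : b ∈ f.range := hb ▸ Subgroup.mem_zpowers b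
  refine ⟨Subgroup.zpowers a, inferInstance, Subgroup.finiteIndex_of_sup_eq_top (N := f.ker) ?_⟩
  rw [← Subgroup.comap_map_eq, MonoidHom.map_zpowers, hb, MonoidHom.comap_range_self]

theorem of_finite_ker (f : G →* G') [Finite f.ker] (hG' : VirtuallyCyclic G') :
    VirtuallyCyclic G := by
  obtain ⟨D, _, _⟩ := hG'
  exact of_finiteIndex (K := D.comap f) (of_finite_ker_of_isCyclic_range (f.subgroupComap D))

end VirtuallyCyclic

theorem preimage_virtuallyCyclic_of_finite_ker
    {G H : Type*} [Group G] [Group H] (f : G →* H)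
    (hker : Finite f.ker) (C : Subgroup H) (hC : VirtuallyCyclic C) :
    VirtuallyCyclic (C.comap f) :=
  hC.of_finite_ker (f.subgroupComap C)
end

section
/- A class of groups C that is closed under isomorphism, contains all virtually cyclic groups, is closed under taking subgroups, and satisfies: if f : G → H is a homomorphism with H ∈ C, ker f ∈ C, and f⁻¹(Z) ∈ C for every infinite cyclic subgroup Z ≤ H, then G ∈ C — such a class is closed under extensions by finite groups: if N ⊴ G is finite and G/N ∈ C, then G ∈ C. -/
/-!
Let `f : G → G/N` be the quotient map. Its kernel `N` is finite, hence virtually cyclic. If `Z ≤ G/N`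
is cyclic, generated by `f g`, then `f⁻¹(Z) = ⟨g⟩ · N`, so the cyclic group `⟨g⟩` has index at most
`|N|` in `f⁻¹(Z)`, which is therefore virtually cyclic. The inheritance property applied to `f`
gives `G ∈ C`.
-/

universe u

open Subgroup
open scoped Pointwise

theorem virtuallyCyclic_of_finite (G : Type*) [Group G] [Finite G] : VirtuallyCyclic G :=
  ⟨⊥, inferInstance, inferInstance⟩

theorem Subgroup.finiteIndex_of_sup_eq_top_s15 {G : Type*} [Group G] {M H : Subgroup G} [M.Normal]
    [Finite M] (hMH : M ⊔ H = ⊤) : H.FiniteIndex := by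
  have hsurj : Function.Surjective (fun m : M => ((m : G) : G ⧸ H)) := by
    intro q
    induction q using QuotientGroup.induction_on with
    | H x =>
      obtain ⟨m, hm, h, hh, rfl⟩ : x ∈ (M : Set G) * (H : Set G) := by
        rw [← normal_mul, hMH]
        trivial
      exact ⟨⟨m, hm⟩, QuotientGroup.eq.mpr (by simpa using hh)⟩
  have : Finite (G ⧸ H) := Finite.of_surjective _ hsurj
  exact finiteIndex_of_finite_quotient

theorem virtuallyCyclic_of_finite_ker_of_isCyclic_range {G Q : Type*} [Group G] [Group Q]
    (f : G →* Q) [Finite f.ker] [IsCyclic f.range] : VirtuallyCyclic G := by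
  obtain ⟨q, hq⟩ := f.range.isCyclic_iff_exists_zpowers_eq_top.mp ‹_›
  obtain ⟨g, rfl⟩ : q ∈ f.range := hq ▸ mem_zpowers q
  refine ⟨zpowers g, inferInstance, finiteIndex_of_sup_eq_top_s15 (M := f.ker) ?_⟩
  refine eq_top_iff.mpr fun x _ => ?_
  obtain ⟨k, hk⟩ := mem_zpowers_iff.mp (hq ▸ ⟨x, rfl⟩ : f x ∈ zpowers (f g))
  have hker : x * (g ^ k)⁻¹ ∈ f.ker := by simp [← hk]
  simpa using mul_mem_sup hker (zpow_mem_zpowers g k)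

theorem virtuallyCyclic_comap_of_finite_ker {G Q : Type*} [Group G] [Group Q] (f : G →* Q)
    [Finite f.ker] (Z : Subgroup Q) [IsCyclic Z] : VirtuallyCyclic (Z.comap f) := by
  have : Finite (f.domRestrict (Z.comap f)).ker := by
    rw [MonoidHom.ker_domRestrict]
    exact Finite.of_equiv _ (subgroupOfEquivOfLe (f.ker_le_comap Z)).toEquiv.symm
  have : IsCyclic (f.domRestrict (Z.comap f)).range := by
    rw [MonoidHom.domRestrict_range]
    exact isCyclic_of_le (map_comap_le f Z)
  exact virtuallyCyclic_of_finite_ker_of_isCyclic_range (f.domRestrict (Z.comap f))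

theorem class_closed_under_finite_extensions_general
    (C : ∀ (G : Type u) [Group G], Prop)
    (hvc : ∀ (G : Type u) [Group G], VirtuallyCyclic G → C G)
    (hhom : ∀ (G H : Type u) [Group G] [Group H] (f : G →* H),
      C H → C f.ker →
      (∀ Z : Subgroup H, (∃ z : H, ¬ IsOfFinOrder z ∧ Z = Subgroup.zpowers z) →
        C (Z.comap f)) → C G)
    (G : Type u) [Group G] (N : Subgroup G) [N.Normal] (hN : Finite N)
    (hQ : C (G ⧸ N)) : C G := by
  have : Finite (QuotientGroup.mk' N).ker := by rwa [QuotientGroup.ker_mk']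
  refine hhom G (G ⧸ N) (QuotientGroup.mk' N) hQ (hvc _ (virtuallyCyclic_of_finite _)) ?_
  rintro Z ⟨z, -, rfl⟩
  exact hvc _ (virtuallyCyclic_comap_of_finite_ker _ _)

theorem class_closed_under_finite_extensions
    (C : ∀ (G : Type u) [Group G], Prop)
    (hiso : ∀ (G H : Type u) [Group G] [Group H], (G ≃* H) → C G → C H)
    (hvc : ∀ (G : Type u) [Group G], VirtuallyCyclic G → C G)
    (hsub : ∀ (G : Type u) [Group G], C G → ∀ H : Subgroup G, C H)
    (hhom : ∀ (G H : Type u) [Group G] [Group H] (f : G →* H),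
      C H → C f.ker →
      (∀ Z : Subgroup H, (∃ z : H, ¬ IsOfFinOrder z ∧ Z = Subgroup.zpowers z) →
        C (Z.comap f)) → C G)
    (G : Type u) [Group G] (N : Subgroup G) [N.Normal] (hN : Finite N)
    (hQ : C (G ⧸ N)) : C G :=
  class_closed_under_finite_extensions_general C hvc hhom G N hN hQ
end

section
/- A class of groups C containing all virtually solvable groups, closed under subgroups and under passage from finite-index subgroups (if a finite index subgroup of G is in C then G is in C), and satisfying the homomorphism inheritance property (if f : G → H has H ∈ C, ker f ∈ C, and f⁻¹(Z) ∈ C for all infinite cyclic Z ≤ H, then G ∈ C), contains every group G admitting an abelian normal subgroup A with G/A ∈ C. -/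
universe u

/-- A group is virtually solvable if it has a solvable subgroup of finite index. -/
def VirtuallySolvable (G : Type*) [Group G] : Prop :=
  ∃ H : Subgroup G, IsSolvable H ∧ H.FiniteIndex

/-!
Apply the homomorphism inheritance property to the quotient map `G → G ⧸ A`. Its kernel `A` is
abelian, and the preimage of an infinite cyclic subgroup of `G ⧸ A` is an extension of the
abelian group `A` by a cyclic group, hence metabelian. Both are solvable, so they lie in `C`.
-/

theorem VirtuallySolvable.of_isSolvable {G : Type*} [Group G] [Group.IsSolvable G] :
    VirtuallySolvable G :=
  ⟨⊤, (inferInstance : Group.IsSolvable (⊤ : Subgroup G)), inferInstance⟩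

theorem Group.isSolvable_of_isMulCommutative (G : Type*) [Group G] [IsMulCommutative G] :
    Group.IsSolvable G :=
  Group.isSolvable_of_comm Std.Commutative.comm

theorem Subgroup.isSolvable_comap {G H : Type*} [Group G] [Group H] (f : G →* H)
    (Z : Subgroup H) [Group.IsSolvable f.ker] [Group.IsSolvable Z] :
    Group.IsSolvable (Z.comap f) :=
  Group.isSolvable_of_ker_le_range (Subgroup.inclusion (f.ker_le_comap Z)) (f.subgroupComap Z)
    fun k hk => ⟨⟨k, congrArg Subtype.val hk⟩, rfl⟩

theorem class_closed_under_abelian_extensions_general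
    (C : ∀ (G : Type u) [Group G], Prop)
    (hvs : ∀ (G : Type u) [Group G], VirtuallySolvable G → C G)
    (hhom : ∀ (G H : Type u) [Group G] [Group H] (f : G →* H),
      C H → C f.ker →
      (∀ Z : Subgroup H, (∃ z : H, ¬ IsOfFinOrder z ∧ Z = Subgroup.zpowers z) →
        C (Z.comap f)) → C G)
    (G : Type u) [Group G] (A : Subgroup G) [A.Normal]
    (hA : ∀ x ∈ A, ∀ y ∈ A, x * y = y * x)
    (hQ : C (G ⧸ A)) : C G := by
  have hAsolv : Group.IsSolvable A :=
    Group.isSolvable_of_comm fun x y => Subtype.ext (hA x x.2 y y.2)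
  have hker : Group.IsSolvable (QuotientGroup.mk' A).ker := by
    rwa [QuotientGroup.ker_mk']
  refine hhom G (G ⧸ A) (QuotientGroup.mk' A) hQ (hvs _ .of_isSolvable) ?_
  rintro Z ⟨z, -, rfl⟩
  have hZ := Group.isSolvable_of_isMulCommutative (Subgroup.zpowers z)
  have hpre : Group.IsSolvable ((Subgroup.zpowers z).comap (QuotientGroup.mk' A)) :=
    Subgroup.isSolvable_comap _ _
  exact hvs _ .of_isSolvable

theorem class_closed_under_abelian_extensions
    (C : ∀ (G : Type u) [Group G], Prop)
    (hiso : ∀ (G H : Type u) [Group G] [Group H], (G ≃* H) → C G → C H)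
    (hvs : ∀ (G : Type u) [Group G], VirtuallySolvable G → C G)
    (hsub : ∀ (G : Type u) [Group G], C G → ∀ H : Subgroup G, C H)
    (hfi : ∀ (G : Type u) [Group G] (H : Subgroup G), H.FiniteIndex → C H → C G)
    (hhom : ∀ (G H : Type u) [Group G] [Group H] (f : G →* H),
      C H → C f.ker →
      (∀ Z : Subgroup H, (∃ z : H, ¬ IsOfFinOrder z ∧ Z = Subgroup.zpowers z) →
        C (Z.comap f)) → C G)
    (G : Type u) [Group G] (A : Subgroup G) [A.Normal]
    (hA : ∀ x ∈ A, ∀ y ∈ A, x * y = y * x)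
    (hQ : C (G ⧸ A)) : C G :=
  class_closed_under_abelian_extensions_general C hvs hhom G A hA hQ
end
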